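/- Let D be a division ring with center F = Z(D), let N be a normal subgroup of D*, and suppose there exists a positive integer d such that for every x ∈ N there is a positive integer n_x ≤ d with x^{n_x} ∈ F. Then for every a ∈ N, every nonzero r ∈ D, and all r_1, …, r_d ∈ D, one has g_d(a r a^{-1} r^{-1}, r_1, …, r_d) = 0. -/

import Mathlib

/-!
If `c ^ n` is central for some `1 ≤ n ≤ d`, then `g_d(c, r₁, …, r_d)` vanishes: composing a
permutation `δ` with the transposition `(0 n)` flips the sign of its term, while the monomial
`c^{δ 0} r₁ ⋯ r_d c^{δ d}` only trades the factors `c⁰` and `cⁿ` between two slots, and since `cⁿ`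
is central both monomials equal `cⁿ` times the one with `c⁰` in both slots. By normality of `N`,
the commutator `a r a⁻¹ r⁻¹` lies in `N`, so the hypothesis provides such an `n` for it.
-/

/-- The generalized polynomial
`g_n(x, y₁, …, yₙ) = ∑_{δ ∈ S_{n+1}} sign(δ) · x^{δ(0)} y₁ x^{δ(1)} ⋯ yₙ x^{δ(n)}`
evaluated at `x = a`, `yᵢ = r i` in a division ring. -/
def gExpr {D : Type*} [DivisionRing D] (n : ℕ) (a : D) (r : Fin n → D) : D :=
  ∑ δ : Equiv.Perm (Fin (n + 1)),
    ((Equiv.Perm.sign δ : ℤ) : D) *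
      (a ^ ((δ 0 : Fin (n + 1)) : ℕ) *
        ((List.finRange n).map fun i => r i * a ^ ((δ i.succ : Fin (n + 1)) : ℕ)).prod)

open Equiv Function

theorem List.prod_map_eq_mul_prod_map_of_commute {ι M : Type*} [Monoid M] {α : M}
    (hα : ∀ y, Commute α y) {f g : ι → M} {j : ι} (hj : g j = α * f j)
    (hne : ∀ x ≠ j, g x = f x) {l : List ι} (hl : l.Nodup) (hjl : j ∈ l) :
    (l.map g).prod = α * (l.map f).prod := by
  induction l with
  | nil => simp at hjl
  | cons a t ih =>
    obtain ⟨hat, ht⟩ := List.nodup_cons.1 hl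
    rcases List.mem_cons.1 hjl with rfl | hjt
    · have htail : t.map g = t.map f :=
        List.map_congr_left fun x hx => hne x (ne_of_mem_of_not_mem hx hat)
      rw [List.map_cons, List.prod_cons, htail, hj, List.map_cons, List.prod_cons, mul_assoc]
    · rw [List.map_cons, List.prod_cons, hne a (ne_of_mem_of_not_mem hjt hat).symm, ih ht hjt,
        List.map_cons, List.prod_cons, (hα (f a)).left_comm]

section InterleavedProd

variable {M : Type*} [Monoid M] {m : ℕ}

def interleavedProd (rs : Fin m → M) (e : Fin (m + 1) → M) : M :=
  e 0 * ((List.finRange m).map fun i => rs i * e i.succ).prod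

theorem interleavedProd_eq_mul_of_commute (rs : Fin m → M) {e e' : Fin (m + 1) → M} {α : M}
    (hα : ∀ y, Commute α y) {p : Fin (m + 1)} (hp : e' p = α * e p)
    (hne : ∀ k ≠ p, e' k = e k) :
    interleavedProd rs e' = α * interleavedProd rs e := by
  cases p using Fin.cases with
  | zero =>
    have htail : ∀ i : Fin m, e' i.succ = e i.succ := fun i => hne _ i.succ_ne_zero
    simp only [interleavedProd, hp, htail, mul_assoc]
  | succ q =>
    have hslot : rs q * e' q.succ = α * (rs q * e q.succ) := by
      rw [hp, (hα (rs q)).left_comm]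
    have hrest : ∀ i ≠ q, rs i * e' i.succ = rs i * e i.succ := fun i hi => by
      rw [hne _ (Fin.succ_injective _ |>.ne hi)]
    rw [interleavedProd, interleavedProd, hne 0 (Fin.succ_ne_zero q).symm,
      List.prod_map_eq_mul_prod_map_of_commute hα hslot hrest (List.nodup_finRange m)
        (List.mem_finRange q), (hα (e 0)).left_comm]

end InterleavedProd

theorem sum_sign_mul_interleavedProd_eq_zero {R : Type*} [Ring R] {m : ℕ} (rs : Fin m → R)
    {z : Fin (m + 1) → R} {α : R} (hα : ∀ y, Commute α y) {i j : Fin (m + 1)} (hij : i ≠ j)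
    (hz : z j = α * z i) :
    ∑ δ : Perm (Fin (m + 1)), ((Perm.sign δ : ℤ) : R) * interleavedProd rs (z ∘ δ) = 0 := by
  set w := update z j (z i) with hw
  have hw_swap : w ∘ swap i j = w := by
    funext k
    rcases eq_or_ne k i with rfl | hki
    · simp [hw, hij]
    rcases eq_or_ne k j with rfl | hkj
    · simp [hw, hij]
    · simp [swap_apply_of_ne_of_ne hki hkj]
  have hterm : ∀ δ : Perm (Fin (m + 1)),
      interleavedProd rs (z ∘ δ) = α * interleavedProd rs (w ∘ δ) := fun δ =>
    interleavedProd_eq_mul_of_commute rs hα (p := δ⁻¹ j) (by simp [hw, hz])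
      fun k hk => by
        have : δ k ≠ j := fun h => hk (by simp [← h])
        simp [hw, update_of_ne this]
  have hterm_swap : ∀ δ : Perm (Fin (m + 1)),
      interleavedProd rs (z ∘ ⇑(swap i j * δ)) = interleavedProd rs (z ∘ δ) := fun δ => by
    rw [hterm, hterm, Perm.coe_mul, ← comp_assoc, hw_swap]
  refine Finset.sum_ninvolution (fun δ => swap i j * δ) (fun δ => ?_)
    (fun δ _ => by simpa using hij) (fun _ => Finset.mem_univ _) (fun δ => swap_mul_self_mul i j δ)
  rw [hterm_swap, Perm.sign_mul, Perm.sign_swap hij]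
  simp

theorem gExpr_eq_zero_of_commute_pow {D : Type*} [DivisionRing D] {c : D} {n d : ℕ}
    (hn0 : 0 < n) (hnd : n ≤ d) (hc : ∀ y, Commute (c ^ n) y) (rs : Fin d → D) :
    gExpr d c rs = 0 :=
  sum_sign_mul_interleavedProd_eq_zero (z := fun k => c ^ (k : ℕ)) rs hc (i := 0)
    (j := ⟨n, Nat.lt_succ_of_le hnd⟩) (Fin.ne_of_val_ne hn0.ne) (by simp)

theorem gExpr_commutator_eq_zero_of_radical_bounded_general
    (D : Type*) [DivisionRing D] (N : Subgroup Dˣ) (hN : N.Normal)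
    (d : ℕ)
    (h : ∀ x ∈ N, ∃ n : ℕ, 0 < n ∧ n ≤ d ∧ ((x : Dˣ) : D) ^ n ∈ Subring.center D) :
    ∀ a ∈ N, ∀ r : D, r ≠ 0 → ∀ rs : Fin d → D,
      gExpr d (((a : Dˣ) : D) * r * ((a : Dˣ) : D)⁻¹ * r⁻¹) rs = 0 := by
  intro a ha r hr rs
  have hcomm : a * Units.mk0 r hr * a⁻¹ * (Units.mk0 r hr)⁻¹ ∈ N := by
    simpa only [mul_assoc] using mul_mem ha (hN.conj_mem _ (inv_mem ha) (Units.mk0 r hr))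
  obtain ⟨n, hn0, hnd, hcen⟩ := h _ hcomm
  simp only [Units.val_mul, Units.val_inv_eq_inv_val, Units.val_mk0] at hcen
  exact gExpr_eq_zero_of_commute_pow hn0 hnd (fun y => (Subring.mem_center_iff.1 hcen y).symm) rs

/-- Let `D` be a division ring with center `F`, `N` a normal subgroup of `Dˣ`, and suppose
there is a positive integer `d` such that every `x ∈ N` satisfies `x ^ n ∈ F` for some
positive `n ≤ d`. Then `g_d(a r a⁻¹ r⁻¹, r₁, …, r_d) = 0` for every `a ∈ N`, every
nonzero `r ∈ D`, and all `r₁, …, r_d ∈ D`. -/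
theorem gExpr_commutator_eq_zero_of_radical_bounded
    (D : Type*) [DivisionRing D] (N : Subgroup Dˣ) (hN : N.Normal)
    (d : ℕ) (hd : 0 < d)
    (h : ∀ x ∈ N, ∃ n : ℕ, 0 < n ∧ n ≤ d ∧ ((x : Dˣ) : D) ^ n ∈ Subring.center D) :
    ∀ a ∈ N, ∀ r : D, r ≠ 0 → ∀ rs : Fin d → D,
      gExpr d (((a : Dˣ) : D) * r * ((a : Dˣ) : D)⁻¹ * r⁻¹) rs = 0 :=
  gExpr_commutator_eq_zero_of_radical_bounded_general D N hN d h
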